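/- arXiv:1911.11115 — 3 statements merged into one kernel-verified Lean document; each statement's English description precedes it below -/
import Mathlib

section
/- Let K be a field of characteristic zero and q₁, q₂ ∈ K. For all F ∈ S_l, G ∈ S_m, H ∈ S_n, the iterated shuffle product satisfies the closed formula (F*G)*H = Alt_{S_{l+m+n}}( F(z₁,…,z_l) G(z_{l+1},…,z_{l+m}) H(z_{l+m+1},…,z_{l+m+n}) · ∏_{1≤i≤l<j≤l+m} μ(z_i,z_j) · ∏_{1≤i≤l+m<j≤l+m+n} μ(z_i,z_j) ), where the last product is over all pairs (i,j) with i in the first two blocks and j in the third block. -/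
set_option synthInstance.maxHeartbeats 1000000
set_option maxHeartbeats 1000000


open MvPolynomial

noncomputable section ShuffleAlgebra

variable (K : Type) [Field K]

/-- The field of rational functions in countably many variables `z 0, z 1, …` over `K`. -/
abbrev RF := FractionRing (MvPolynomial ℕ K)

/-- The variable `z i` as a rational function. -/
def Z (i : ℕ) : RF K := algebraMap (MvPolynomial ℕ K) (RF K) (X i)

/-- A constant, viewed as a rational function. -/
def cst (q : K) : RF K := algebraMap (MvPolynomial ℕ K) (RF K) (C q)

/-- Substitution `z i ↦ z (f i)` for an injective `f`, as a ring homomorphism of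
rational functions. -/
def ren (f : ℕ → ℕ) (hf : Function.Injective f) : RF K →+* RF K :=
  IsFractionRing.lift (g := (algebraMap (MvPolynomial ℕ K) (RF K)).comp (rename f).toRingHom)
    ((IsFractionRing.injective (MvPolynomial ℕ K) (RF K)).comp (rename_injective f hf))

/-- A permutation of `Fin k` extended (by the identity) to a permutation of `ℕ`. -/
def natPerm (k : ℕ) (σ : Equiv.Perm (Fin k)) : Equiv.Perm ℕ :=
  σ.extendDomain Fin.equivSubtype

/-- `Alt_{S_k}(F) = (1/k!) ∑_{σ ∈ S_k} sgn(σ) F(z_{σ(1)},…,z_{σ(k)})`. -/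
def Alt (k : ℕ) (F : RF K) : RF K :=
  (k.factorial : RF K)⁻¹ *
    ∑ σ : Equiv.Perm (Fin k),
      ((Equiv.Perm.sign σ : ℤ) : RF K) * ren K (natPerm k σ) (natPerm k σ).injective F

variable (q₁ q₂ : K)

/-- `μ(x,y) = (x − q₁y)(x − q₂y)/(x − y)²`. -/
def mu (x y : RF K) : RF K := (x - cst K q₁ * y) * (x - cst K q₂ * y) / (x - y) ^ 2

/-- The shuffle product of `F` (a function of `z 0, …, z (n-1)`) and `G`
(a function of `z 0, …, z (m-1)`). -/
def shuffle (n m : ℕ) (F G : RF K) : RF K :=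
  Alt K (n + m) (F * ren K (· + n) (add_left_injective n) G *
    ∏ i : Fin n, ∏ j : Fin m, mu K q₁ q₂ (Z K i.val) (Z K (n + j.val)))

/-- The Vandermonde determinant `Δ_n = ∏_{i<j} (z i − z j)`. -/
def vand (n : ℕ) : RF K :=
  algebraMap (MvPolynomial ℕ K) (RF K)
    (∏ j ∈ Finset.range n, ∏ i ∈ Finset.range j, (X i - X j))

/-- `f` is a symmetric Laurent polynomial in the variables `z 0, …, z (n-1)`. -/
def IsSymLaurent (n : ℕ) (f : RF K) : Prop :=
  (∃ (p : MvPolynomial ℕ K) (N : ℕ), (↑p.vars : Set ℕ) ⊆ Set.Iio n ∧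
      f * algebraMap (MvPolynomial ℕ K) (RF K) ((∏ i ∈ Finset.range n, X i) ^ N)
        = algebraMap (MvPolynomial ℕ K) (RF K) p) ∧
  ∀ σ : Equiv.Perm (Fin n), ren K (natPerm n σ) (natPerm n σ).injective f = f

/-- The `n`-th graded component `S_n` of the shuffle algebra: quotients `f/Δ_n` with
`f` a symmetric Laurent polynomial in `z 0, …, z (n-1)`. -/
def Sgr (n : ℕ) : Set (RF K) :=
  {F | ∃ f : RF K, IsSymLaurent K n f ∧ F = f / vand K n}

/-- Iterated (left-to-right) shuffle product of a list of elements of `S₁`. -/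
def iterSh (l : List (RF K)) : RF K :=
  (l.foldl (fun acc f => (shuffle K q₁ q₂ acc.2 1 acc.1 f, acc.2 + 1)) ((1 : RF K), 0)).1

/-- The iterated shuffle product `z^{i₁} * ⋯ * z^{i_n}`. -/
def zpows (l : List ℤ) : RF K := iterSh K q₁ q₂ (l.map fun i => Z K 0 ^ i)

/-- `F` is defined at the point `α` and its value there is `v`. -/
def EvalAt (α : ℕ → K) (F : RF K) (v : K) : Prop :=
  ∃ p q : MvPolynomial ℕ K, eval α q ≠ 0 ∧
    F * algebraMap (MvPolynomial ℕ K) (RF K) q = algebraMap (MvPolynomial ℕ K) (RF K) p ∧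
    eval α p = v * eval α q

end ShuffleAlgebra

noncomputable section AuxProof

open Equiv Equiv.Perm

variable (K : Type) [Field K]

theorem ren_algebraMap (f : ℕ → ℕ) (hf : Function.Injective f) (p : MvPolynomial ℕ K) :
    ren K f hf (algebraMap (MvPolynomial ℕ K) (RF K) p)
      = algebraMap (MvPolynomial ℕ K) (RF K) (rename f p) :=
  IsFractionRing.lift_algebraMap _ _

theorem ren_comp_apply (f g : ℕ → ℕ) (hf : Function.Injective f)
    (hg : Function.Injective g) (x : RF K) :
    ren K f hf (ren K g hg x) = ren K (f ∘ g) (hf.comp hg) x := by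
  have h : (ren K f hf).comp (ren K g hg) = ren K (f ∘ g) (hf.comp hg) := by
    apply IsLocalization.ringHom_ext (nonZeroDivisors (MvPolynomial ℕ K))
    refine RingHom.ext fun p => ?_
    simp only [RingHom.comp_apply, ren_algebraMap, rename_rename]
  exact congrFun (congrArg DFunLike.coe h) x

theorem ren_congr {f g : ℕ → ℕ} (hfg : f = g) (hf : Function.Injective f)
    (hg : Function.Injective g) (x : RF K) : ren K f hf x = ren K g hg x := by
  subst hfg; rfl

theorem ren_Z (f : ℕ → ℕ) (hf : Function.Injective f) (i : ℕ) :
    ren K f hf (Z K i) = Z K (f i) := by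
  simp [Z, ren_algebraMap]

theorem ren_cst (f : ℕ → ℕ) (hf : Function.Injective f) (q : K) :
    ren K f hf (cst K q) = cst K q := by
  simp [cst, ren_algebraMap]

theorem ren_mu (q₁ q₂ : K) (f : ℕ → ℕ) (hf : Function.Injective f) (a b : ℕ) :
    ren K f hf (mu K q₁ q₂ (Z K a) (Z K b)) = mu K q₁ q₂ (Z K (f a)) (Z K (f b)) := by
  simp [mu, map_div₀, ren_Z, ren_cst]

/-- The cast of the sign of a permutation into `RF K`. -/
def sgn {k : ℕ} (σ : Equiv.Perm (Fin k)) : RF K := ((Equiv.Perm.sign σ : ℤ) : RF K)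

theorem sgn_mul {k : ℕ} (σ τ : Equiv.Perm (Fin k)) :
    sgn K (σ * τ) = sgn K σ * sgn K τ := by
  simp [sgn, ← Int.cast_mul, ← Units.val_mul]

theorem sgn_mul_self {k : ℕ} (σ : Equiv.Perm (Fin k)) : sgn K σ * sgn K σ = 1 := by
  simp [sgn, ← Int.cast_mul, ← Units.val_mul]

theorem sgn_inv {k : ℕ} (σ : Equiv.Perm (Fin k)) : sgn K σ⁻¹ = sgn K σ := by
  simp [sgn]

/-- `natPerm k σ` fixes all naturals `≥ k`. -/
theorem natPerm_apply_ge (k : ℕ) (σ : Equiv.Perm (Fin k)) {i : ℕ} (h : k ≤ i) :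
    natPerm k σ i = i :=
  Equiv.Perm.extendDomain_apply_not_subtype σ Fin.equivSubtype (by omega)

theorem natPerm_apply_fin (k : ℕ) (σ : Equiv.Perm (Fin k)) (i : Fin k) :
    natPerm k σ i.val = (σ i).val := by
  have : (Fin.equivSubtype i : {n : ℕ // n < k}) = ⟨i.val, i.isLt⟩ := rfl
  have h := Equiv.Perm.extendDomain_apply_subtype σ (Fin.equivSubtype (n := k)) (b := i.val) i.isLt
  simpa [natPerm, Fin.equivSubtype] using h

/-- An equivalence exhibiting `Fin k` as the initial segment of `Fin k'`. -/
def finLiftEquiv (k k' : ℕ) (h : k ≤ k') : Fin k ≃ {x : Fin k' // x.val < k} where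
  toFun x := ⟨⟨x.val, lt_of_lt_of_le x.isLt h⟩, x.isLt⟩
  invFun x := ⟨x.1.val, x.2⟩
  left_inv x := rfl
  right_inv x := rfl

theorem natPerm_lift (k k' : ℕ) (h : k ≤ k') (σ : Equiv.Perm (Fin k)) :
    ∃ σ' : Equiv.Perm (Fin k'), Equiv.Perm.sign σ' = Equiv.Perm.sign σ ∧
      natPerm k' σ' = natPerm k σ := by
  refine ⟨σ.extendDomain (finLiftEquiv k k' h), Equiv.Perm.sign_extendDomain σ _, ?_⟩
  ext i
  rcases lt_or_ge i k with hik | hik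
  · have hik' : i < k' := lt_of_lt_of_le hik h
    have h1 : natPerm k' (σ.extendDomain (finLiftEquiv k k' h)) i
        = ((σ.extendDomain (finLiftEquiv k k' h)) ⟨i, hik'⟩ : Fin k').val := by
      exact natPerm_apply_fin k' _ ⟨i, hik'⟩
    have h2 : (σ.extendDomain (finLiftEquiv k k' h)) ⟨i, hik'⟩
        = ((finLiftEquiv k k' h) (σ ((finLiftEquiv k k' h).symm ⟨⟨i, hik'⟩, hik⟩)) : Fin k') :=
      Equiv.Perm.extendDomain_apply_subtype σ (finLiftEquiv k k' h) (b := ⟨i, hik'⟩) hik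
    have h3 : natPerm k σ i = (σ ⟨i, hik⟩).val := natPerm_apply_fin k σ ⟨i, hik⟩
    rw [h1, h2, h3]
    rfl
  · rcases lt_or_ge i k' with hik' | hik'
    · have h1 : natPerm k' (σ.extendDomain (finLiftEquiv k k' h)) i
          = ((σ.extendDomain (finLiftEquiv k k' h)) ⟨i, hik'⟩ : Fin k').val :=
        natPerm_apply_fin k' _ ⟨i, hik'⟩
      have h2 : (σ.extendDomain (finLiftEquiv k k' h)) ⟨i, hik'⟩ = ⟨i, hik'⟩ :=
        Equiv.Perm.extendDomain_apply_not_subtype σ (finLiftEquiv k k' h)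
          (b := ⟨i, hik'⟩) (by simpa using Nat.not_lt.mpr hik)
      rw [h1, h2, natPerm_apply_ge k σ hik]
    · rw [natPerm_apply_ge k' _ hik', natPerm_apply_ge k σ hik]

theorem natPerm_mul (k : ℕ) (σ τ : Equiv.Perm (Fin k)) :
    natPerm k (σ * τ) = natPerm k σ * natPerm k τ := by
  simp [natPerm]

theorem Alt_const_mul (k : ℕ) (c x : RF K)
    (hc : ∀ (f : ℕ → ℕ) (hf : Function.Injective f), ren K f hf c = c) :
    Alt K k (c * x) = c * Alt K k x := by
  simp only [Alt, map_mul, hc, mul_left_comm _ c, ← Finset.mul_sum]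

theorem Alt_sum {ι : Type*} (k : ℕ) (s : Finset ι) (f : ι → RF K) :
    Alt K k (∑ i ∈ s, f i) = ∑ i ∈ s, Alt K k (f i) := by
  simp only [Alt, map_sum, Finset.mul_sum]
  rw [Finset.sum_comm]

/-- `Alt` absorbs a permutation of the variables, at the cost of a sign. -/
theorem Alt_ren (k : ℕ) (σ : Equiv.Perm (Fin k)) (x : RF K) :
    Alt K k (ren K (natPerm k σ) (natPerm k σ).injective x) = sgn K σ * Alt K k x := by
  simp only [Alt]
  rw [mul_left_comm]
  congr 1
  have step : ∀ τ : Equiv.Perm (Fin k),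
      ren K (natPerm k τ) (natPerm k τ).injective
          (ren K (natPerm k σ) (natPerm k σ).injective x)
        = ren K (natPerm k (τ * σ)) (natPerm k (τ * σ)).injective x := by
    intro τ
    rw [ren_comp_apply]
    exact ren_congr K (by rw [natPerm_mul]; rfl) _ _ x
  calc ∑ τ : Equiv.Perm (Fin k), ((Equiv.Perm.sign τ : ℤ) : RF K) *
          ren K (natPerm k τ) (natPerm k τ).injective
            (ren K (natPerm k σ) (natPerm k σ).injective x)
      = ∑ τ : Equiv.Perm (Fin k), sgn K τ *
          ren K (natPerm k (τ * σ)) (natPerm k (τ * σ)).injective x := by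
        refine Finset.sum_congr rfl fun τ _ => ?_
        rw [step τ]; rfl
    _ = ∑ ρ : Equiv.Perm (Fin k), sgn K (ρ * σ⁻¹) *
          ren K (natPerm k ρ) (natPerm k ρ).injective x := by
        refine Fintype.sum_equiv (Equiv.mulRight σ) _ _ fun τ => ?_
        simp only [Equiv.coe_mulRight, mul_inv_cancel_right]
    _ = sgn K σ * ∑ τ : Equiv.Perm (Fin k), ((Equiv.Perm.sign τ : ℤ) : RF K) *
          ren K (natPerm k τ) (natPerm k τ).injective x := by
        rw [Finset.mul_sum]
        refine Finset.sum_congr rfl fun ρ _ => ?_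
        rw [sgn_mul, sgn_inv]
        show sgn K ρ * sgn K σ * _ = sgn K σ * (sgn K ρ * _)
        ring

/-- Key lemma: an inner `Alt` over the first `k` variables can be removed inside an
outer `Alt` over `k' ≥ k` variables, provided the cofactor `B` is symmetric in the
first `k` variables. -/
theorem Alt_Alt_mul (k k' : ℕ) (h : k ≤ k') [CharZero K] (A B : RF K)
    (hB : ∀ σ : Equiv.Perm (Fin k),
      ren K (natPerm k σ) (natPerm k σ).injective B = B) :
    Alt K k' (Alt K k A * B) = Alt K k' (A * B) := by
  haveI : CharZero (RF K) :=
    charZero_of_injective_algebraMap (IsFractionRing.injective (MvPolynomial ℕ K) (RF K))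
  have hconst : ∀ (f : ℕ → ℕ) (hf : Function.Injective f),
      ren K f hf ((k.factorial : RF K))⁻¹ = ((k.factorial : RF K))⁻¹ := by
    intro f hf; rw [map_inv₀, map_natCast]
  have hsgn : ∀ (σ : Equiv.Perm (Fin k)) (f : ℕ → ℕ) (hf : Function.Injective f),
      ren K f hf (sgn K σ) = sgn K σ := by
    intro σ f hf; exact map_intCast _ _
  -- rewrite `Alt k A * B` as a sum of renamed copies of `A * B`
  have expand : Alt K k A * B = (k.factorial : RF K)⁻¹ *
      ∑ σ : Equiv.Perm (Fin k), sgn K σ *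
        ren K (natPerm k σ) (natPerm k σ).injective (A * B) := by
    rw [Alt, mul_assoc, Finset.sum_mul]
    congr 1
    refine Finset.sum_congr rfl fun σ _ => ?_
    rw [mul_assoc, map_mul, hB σ]
    rfl
  rw [expand, Alt_const_mul K k' _ _ hconst, Alt_sum]
  have term : ∀ σ : Equiv.Perm (Fin k),
      Alt K k' (sgn K σ * ren K (natPerm k σ) (natPerm k σ).injective (A * B))
        = Alt K k' (A * B) := by
    intro σ
    obtain ⟨σ', hs, hp⟩ := natPerm_lift k k' h σ
    have hfun : ⇑(natPerm k σ) = ⇑(natPerm k' σ') := by rw [hp]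
    rw [Alt_const_mul K k' _ _ (hsgn σ),
      ren_congr K hfun _ (natPerm k' σ').injective,
      Alt_ren, ← mul_assoc]
    have : sgn K σ * sgn K σ' = 1 := by
      rw [show sgn K σ' = sgn K σ by simp [sgn, hs], sgn_mul_self]
    rw [this, one_mul]
  rw [Finset.sum_congr rfl fun σ _ => term σ, Finset.sum_const, Finset.card_univ,
    Fintype.card_perm, Fintype.card_fin, nsmul_eq_mul, ← mul_assoc,
    inv_mul_cancel₀ (by exact_mod_cast Nat.factorial_ne_zero k), one_mul]

end AuxProof

/-- closed formula for the iterated shuffle product. -/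
theorem shuffle_assoc_closed_formula (K : Type) [Field K] [CharZero K] (q₁ q₂ : K)
    (l m n : ℕ) (F G H : RF K)
    (hF : F ∈ Sgr K l) (hG : G ∈ Sgr K m) (hH : H ∈ Sgr K n) :
    shuffle K q₁ q₂ (l + m) n (shuffle K q₁ q₂ l m F G) H =
      Alt K (l + m + n)
        (F * ren K (· + l) (add_left_injective l) G *
          ren K (· + (l + m)) (add_left_injective (l + m)) H *
          (∏ i : Fin l, ∏ j : Fin m, mu K q₁ q₂ (Z K i.val) (Z K (l + j.val))) *
          (∏ i : Fin (l + m), ∏ j : Fin n, mu K q₁ q₂ (Z K i.val) (Z K (l + m + j.val)))) := by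
  classical
  have hB : ∀ σ : Equiv.Perm (Fin (l + m)),
      ren K (natPerm (l + m) σ) (natPerm (l + m) σ).injective
        (ren K (· + (l + m)) (add_left_injective (l + m)) H *
          ∏ i : Fin (l + m), ∏ j : Fin n, mu K q₁ q₂ (Z K i.val) (Z K (l + m + j.val)))
      = ren K (· + (l + m)) (add_left_injective (l + m)) H *
          ∏ i : Fin (l + m), ∏ j : Fin n, mu K q₁ q₂ (Z K i.val) (Z K (l + m + j.val)) := by
    intro σ
    rw [map_mul]
    congr 1
    · rw [ren_comp_apply]
      refine ren_congr K ?_ _ _ H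
      funext i
      exact natPerm_apply_ge (l + m) σ (Nat.le_add_left _ _)
    · rw [map_prod]
      calc ∏ i : Fin (l + m),
            ren K (natPerm (l + m) σ) (natPerm (l + m) σ).injective
              (∏ j : Fin n, mu K q₁ q₂ (Z K i.val) (Z K (l + m + j.val)))
          = ∏ i : Fin (l + m), ∏ j : Fin n,
              mu K q₁ q₂ (Z K (σ i).val) (Z K (l + m + j.val)) := by
            refine Finset.prod_congr rfl fun i _ => ?_
            rw [map_prod]
            refine Finset.prod_congr rfl fun j _ => ?_
            rw [ren_mu, natPerm_apply_fin,
              natPerm_apply_ge _ _ (Nat.le_add_right _ _)]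
        _ = ∏ i : Fin (l + m), ∏ j : Fin n,
              mu K q₁ q₂ (Z K i.val) (Z K (l + m + j.val)) :=
            Equiv.prod_comp σ
              (fun i : Fin (l + m) =>
                ∏ j : Fin n, mu K q₁ q₂ (Z K i.val) (Z K (l + m + j.val)))
  simp only [shuffle]
  rw [mul_assoc, Alt_Alt_mul K (l + m) (l + m + n) (Nat.le_add_right _ _) _ _ hB]
  congr 1
  ring
end

section
/- Let K be a field and q₁, q₂ ∈ K nonzero elements such that q₁^a q₂^b ≠ 1 for all pairs of nonnegative integers (a,b) ≠ (0,0). Then for any nonzero elements α₁,…,α_n ∈ K there exists a permutation σ of {1,…,n} such that for all 1 ≤ i < j ≤ n one has α_{σ(i)} ≠ q₁·α_{σ(j)} and α_{σ(i)} ≠ q₂·α_{σ(j)}. -/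
/-- if `q₁, q₂` are nonzero and satisfy no multiplicative relation
`q₁^a q₂^b = 1` with `(a,b) ≠ (0,0)` nonnegative, then any family of nonzero elements
`α₁, …, α_n` can be reordered so that `α_{σ(i)} ≠ q₁ α_{σ(j)}` and
`α_{σ(i)} ≠ q₂ α_{σ(j)}` whenever `i < j`. -/
theorem exists_order_without_relations {K : Type*} [Field K] (q₁ q₂ : K)
    (hq₁ : q₁ ≠ 0) (hq₂ : q₂ ≠ 0)
    (hgen : ∀ a b : ℕ, (a, b) ≠ (0, 0) → q₁ ^ a * q₂ ^ b ≠ 1)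
    (n : ℕ) (α : Fin n → K) (hα : ∀ i, α i ≠ 0) :
    ∃ σ : Equiv.Perm (Fin n), ∀ i j : Fin n, i < j →
      α (σ i) ≠ q₁ * α (σ j) ∧ α (σ i) ≠ q₂ * α (σ j) := by
  induction n with
  | zero =>
    exact ⟨1, fun i j _ => i.elim0⟩
  | succ n ih =>
    set r : Fin (n + 1) → Fin (n + 1) → Prop :=
      fun i j => ∃ a b : ℕ, (a, b) ≠ (0, 0) ∧ α j = q₁ ^ a * q₂ ^ b * α i with hr
    have hirr : ∀ i, ¬ r i i := by
      rintro i ⟨a, b, hab, h⟩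
      have : q₁ ^ a * q₂ ^ b = 1 := by
        have h' : (q₁ ^ a * q₂ ^ b) * α i = 1 * α i := by rw [one_mul]; exact h.symm
        exact mul_right_cancel₀ (hα i) h'
      exact hgen a b hab this
    have htrans : ∀ i j k, r i j → r j k → r i k := by
      rintro i j k ⟨a₁, b₁, hab₁, h₁⟩ ⟨a₂, b₂, hab₂, h₂⟩
      refine ⟨a₁ + a₂, b₁ + b₂, ?_, ?_⟩
      · simp only [ne_eq, Prod.mk.injEq, not_and] at hab₁ hab₂ ⊢
        omega
      · rw [h₂, h₁, pow_add, pow_add]; ring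
    haveI : IsIrrefl (Fin (n + 1)) r := ⟨hirr⟩
    haveI : IsTrans (Fin (n + 1)) r := ⟨fun i j k => htrans i j k⟩
    obtain ⟨m, -, hmin⟩ :=
      (Finite.wellFounded_of_trans_of_irrefl r).has_min Set.univ ⟨0, trivial⟩
    -- m is minimal: no x with r x m, i.e. α m is not q₁^a q₂^b times any α x
    obtain ⟨τ, hτ⟩ := ih (fun i => α (m.succAbove i)) (fun i => hα _)
    set f : Fin (n + 1) → Fin (n + 1) :=
      Fin.cases m (fun i => m.succAbove (τ i)) with hfdef
    have hf : Function.Injective f := by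
      intro i j hij
      induction i using Fin.cases with
      | zero =>
        induction j using Fin.cases with
        | zero => rfl
        | succ l =>
          simp only [hfdef, Fin.cases_zero, Fin.cases_succ] at hij
          exact absurd hij.symm (Fin.succAbove_ne m (τ l))
      | succ k =>
        induction j using Fin.cases with
        | zero =>
          simp only [hfdef, Fin.cases_zero, Fin.cases_succ] at hij
          exact absurd hij (Fin.succAbove_ne m (τ k))
        | succ l =>
          simp only [hfdef, Fin.cases_succ] at hij
          have := τ.injective (Fin.succAbove_right_injective hij)
          rw [this]
    refine ⟨Equiv.ofBijective f (Finite.injective_iff_bijective.mp hf), ?_⟩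
    intro i j hij
    have hσ : ∀ x, (Equiv.ofBijective f (Finite.injective_iff_bijective.mp hf)) x = f x :=
      fun x => rfl
    rw [hσ, hσ]
    induction j using Fin.cases with
    | zero => exact absurd hij (Fin.not_lt_zero i)
    | succ l =>
      induction i using Fin.cases with
      | zero =>
        simp only [hfdef, Fin.cases_zero, Fin.cases_succ]
        constructor
        · intro h
          exact hmin (m.succAbove (τ l)) trivial ⟨1, 0, by simp, by simpa using h⟩
        · intro h
          exact hmin (m.succAbove (τ l)) trivial ⟨0, 1, by simp, by simpa using h⟩
      | succ k =>
        simp only [hfdef, Fin.cases_succ]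
        exact hτ k l (by simpa using hij)
end

section
/- Let S ⊆ ℕ×ℕ be a finite set with (0,0) ∈ S, and let N(S) be the number of rooted binary trees whose position map is injective and has image exactly S. Let k be the number of elements (a,b) ∈ S with a ≥ 1, b ≥ 1, (a−1,b) ∈ S and (a,b−1) ∈ S. Then either N(S) = 0 or N(S) = 2^k. -/
/-- A rooted binary tree: every vertex has an optional left child and an optional
right child. -/
inductive BTree : Type where
  | node : Option BTree → Option BTree → BTree

namespace BTree

/-- Number of vertices of an optional rooted binary tree. -/
def osize : Option BTree → ℕ
  | none => 0
  | some (node l r) => 1 + osize l + osize r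

/-- Number of vertices of a rooted binary tree. -/
def size (t : BTree) : ℕ := osize (some t)

/-- The multiset of positions of the vertices of an optional rooted binary tree whose
root is placed at `p`: the left (resp. right) child of a vertex at `(a,b)` is at
`(a+1,b)` (resp. `(a,b+1)`). -/
def opos : Option BTree → ℕ × ℕ → Multiset (ℕ × ℕ)
  | none, _ => 0
  | some (node l r), p => p ::ₘ (opos l (p.1 + 1, p.2) + opos r (p.1, p.2 + 1))

/-- The multiset of positions of the vertices of a rooted binary tree, the root being
placed at `(0,0)`. -/
def positions (t : BTree) : Multiset (ℕ × ℕ) := opos (some t) (0, 0)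

/-- The position map of a rooted binary tree is injective. -/
def PosInjective (t : BTree) : Prop := t.positions.Nodup

end BTree

namespace BTreeAux
open BTree

abbrev Pt := ℕ × ℕ

def lp (p : Pt) : Pt := (p.1 + 1, p.2)
def rp (p : Pt) : Pt := (p.1, p.2 + 1)

lemma lp_ne_rp (p : Pt) : lp p ≠ rp p := by
  simp [lp, rp, Prod.ext_iff]

lemma lp_inj {p q : Pt} (h : lp p = lp q) : p = q := by
  simpa [lp, Prod.ext_iff] using h

lemma rp_inj {p q : Pt} (h : rp p = rp q) : p = q := by
  simpa [rp, Prod.ext_iff] using h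

@[simp] lemma osize_some (l r : Option BTree) :
    osize (some (BTree.node l r)) = 1 + osize l + osize r := by rw [osize]

lemma opos_some (l r : Option BTree) (p : Pt) :
    opos (some (BTree.node l r)) p = p ::ₘ (opos l (lp p) + opos r (rp p)) := by
  rw [opos]; rfl

lemma root_mem_opos (t : BTree) (p : Pt) : p ∈ opos (some t) p := by
  obtain ⟨l, r⟩ := t
  rw [opos_some]
  exact Multiset.mem_cons_self _ _

def olset : Option BTree → Pt → Multiset Pt
  | none, _ => 0
  | some (node l r), p =>
      (if l.isSome then {lp p} else 0) + (olset l (lp p) + olset r (rp p))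

def orset : Option BTree → Pt → Multiset Pt
  | none, _ => 0
  | some (node l r), p =>
      (if r.isSome then {rp p} else 0) + (orset l (lp p) + orset r (rp p))

def overt : Option BTree → Pt → Multiset (BTree × Pt)
  | none, _ => 0
  | some (node l r), p => (node l r, p) ::ₘ (overt l (lp p) + overt r (rp p))

lemma opos_map_overt : ∀ (ot : Option BTree) (p : Pt),
    opos ot p = (overt ot p).map Prod.snd
  | none, p => by simp [opos, overt]
  | some (.node l r), p => by
      rw [opos_some, overt]
      simp [Multiset.map_cons, opos_map_overt l, opos_map_overt r]
  termination_by ot => osize ot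
  decreasing_by all_goals (simp [osize]; try omega)

lemma opos_split : ∀ (ot : Option BTree) (p : Pt),
    opos ot p = (if ot.isSome then ({p} : Multiset Pt) else 0) + (olset ot p + orset ot p)
  | none, p => by simp [opos, olset, orset]
  | some (.node l r), p => by
      rw [opos_some, olset, orset, opos_split l, opos_split r]
      simp only [Option.isSome_some, if_true, ← Multiset.singleton_add]
      abel
  termination_by ot => osize ot
  decreasing_by all_goals (simp [osize]; try omega)

lemma mem_olset_iff : ∀ (ot : Option BTree) (p : Pt) (q : Pt),
    q ∈ olset ot p ↔ ∃ a b x, (BTree.node (some a) b, x) ∈ overt ot p ∧ q = lp x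
  | none, p, q => by simp [olset, overt]
  | some (.node l r), p, q => by
      rw [olset, overt]
      constructor
      · intro hq
        rcases Multiset.mem_add.1 hq with h | h
        · by_cases hl : l.isSome
          · rcases Option.isSome_iff_exists.1 hl with ⟨a, ha⟩
            rw [if_pos hl, Multiset.mem_singleton] at h
            exact ⟨a, r, p, by subst ha; exact Multiset.mem_cons_self _ _, h⟩
          · rw [if_neg hl] at h
            exact absurd h (Multiset.notMem_zero q)
        · rcases Multiset.mem_add.1 h with h | h
          · rcases (mem_olset_iff l (lp p) q).1 h with ⟨a, b, x, hx, hq'⟩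
            exact ⟨a, b, x, Multiset.mem_cons_of_mem (Multiset.mem_add.2 (Or.inl hx)), hq'⟩
          · rcases (mem_olset_iff r (rp p) q).1 h with ⟨a, b, x, hx, hq'⟩
            exact ⟨a, b, x, Multiset.mem_cons_of_mem (Multiset.mem_add.2 (Or.inr hx)), hq'⟩
      · rintro ⟨a, b, x, hx, rfl⟩
        rcases Multiset.mem_cons.1 hx with h | h
        · injection h with h1 h2
          injection h1 with hl hr
          subst h2
          rw [Multiset.mem_add]
          left
          rw [← hl]
          simp
        · rcases Multiset.mem_add.1 h with h | h
          · exact Multiset.mem_add.2 (Or.inr (Multiset.mem_add.2 (Or.inl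
              ((mem_olset_iff l (lp p) (lp x)).2 ⟨a, b, x, h, rfl⟩))))
          · exact Multiset.mem_add.2 (Or.inr (Multiset.mem_add.2 (Or.inr
              ((mem_olset_iff r (rp p) (lp x)).2 ⟨a, b, x, h, rfl⟩))))
  termination_by ot => osize ot
  decreasing_by all_goals (simp [osize]; try omega)

lemma mem_orset_iff : ∀ (ot : Option BTree) (p : Pt) (q : Pt),
    q ∈ orset ot p ↔ ∃ a b x, (BTree.node a (some b), x) ∈ overt ot p ∧ q = rp x
  | none, p, q => by simp [orset, overt]
  | some (.node l r), p, q => by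
      rw [orset, overt]
      constructor
      · intro hq
        rcases Multiset.mem_add.1 hq with h | h
        · by_cases hr : r.isSome
          · rcases Option.isSome_iff_exists.1 hr with ⟨b, hb⟩
            rw [if_pos hr, Multiset.mem_singleton] at h
            exact ⟨l, b, p, by subst hb; exact Multiset.mem_cons_self _ _, h⟩
          · rw [if_neg hr] at h
            exact absurd h (Multiset.notMem_zero q)
        · rcases Multiset.mem_add.1 h with h | h
          · rcases (mem_orset_iff l (lp p) q).1 h with ⟨a, b, x, hx, hq'⟩
            exact ⟨a, b, x, Multiset.mem_cons_of_mem (Multiset.mem_add.2 (Or.inl hx)), hq'⟩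
          · rcases (mem_orset_iff r (rp p) q).1 h with ⟨a, b, x, hx, hq'⟩
            exact ⟨a, b, x, Multiset.mem_cons_of_mem (Multiset.mem_add.2 (Or.inr hx)), hq'⟩
      · rintro ⟨a, b, x, hx, rfl⟩
        rcases Multiset.mem_cons.1 hx with h | h
        · injection h with h1 h2
          injection h1 with hl hr
          subst h2
          rw [Multiset.mem_add]
          left
          rw [← hr]
          simp
        · rcases Multiset.mem_add.1 h with h | h
          · exact Multiset.mem_add.2 (Or.inr (Multiset.mem_add.2 (Or.inl
              ((mem_orset_iff l (lp p) (rp x)).2 ⟨a, b, x, h, rfl⟩))))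
          · exact Multiset.mem_add.2 (Or.inr (Multiset.mem_add.2 (Or.inr
              ((mem_orset_iff r (rp p) (rp x)).2 ⟨a, b, x, h, rfl⟩))))
  termination_by ot => osize ot
  decreasing_by all_goals (simp [osize]; try omega)

section
variable (S : Finset Pt) (c : Pt → Bool)

def Step (q p : Pt) : Prop :=
  q ∈ S ∧ ((c q = true ∧ q = lp p) ∨ (c q = false ∧ q = rp p))

def Desc (q p : Pt) : Prop := Relation.ReflTransGen (Step S c) q p

def anc (q : Pt) : Pt := if c q then (q.1 - 1, q.2) else (q.1, q.2 - 1)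

variable {S c}

lemma Step.sum {q p : Pt} (h : Step S c q p) : q.1 + q.2 = p.1 + p.2 + 1 := by
  rcases h.2 with ⟨_, rfl⟩ | ⟨_, rfl⟩ <;> simp [lp, rp] <;> omega

lemma Step.anc_eq {q p : Pt} (h : Step S c q p) : anc c q = p := by
  rcases h.2 with ⟨hc, rfl⟩ | ⟨hc, rfl⟩ <;>
    simp only [anc, hc, if_true, if_false, Bool.false_eq_true] <;>
    simp [lp, rp]

lemma Desc.sum_le {q p : Pt} (h : Desc S c q p) : p.1 + p.2 ≤ q.1 + q.2 := by
  induction h with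
  | refl => exact le_refl _
  | tail hsub hstep ih =>
      have := hstep.sum
      omega

lemma Desc.anc_iterate {q p : Pt} (h : Desc S c q p) :
    (anc c)^[q.1 + q.2 - (p.1 + p.2)] q = p := by
  induction h with
  | refl => simp
  | @tail b m hsub hstep ih =>
      have hs := hstep.sum
      have hle : b.1 + b.2 ≤ q.1 + q.2 := Desc.sum_le hsub
      have hk : q.1 + q.2 - (m.1 + m.2) = (q.1 + q.2 - (b.1 + b.2)) + 1 := by omega
      rw [hk, Function.iterate_succ_apply', ih, hstep.anc_eq]

lemma desc_lp_rp_disjoint {q p : Pt} (h1 : Desc S c q (lp p)) (h2 : Desc S c q (rp p)) :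
    False := by
  have e1 := h1.anc_iterate
  have e2 := h2.anc_iterate
  have hk : q.1 + q.2 - ((lp p).1 + (lp p).2) = q.1 + q.2 - ((rp p).1 + (rp p).2) := by
    simp [lp, rp]; omega
  rw [hk] at e1
  exact lp_ne_rp p (by rw [← e1, e2])

def buildF (S : Finset Pt) (c : Pt → Bool) : ℕ → Pt → BTree
  | 0, _ => .node none none
  | n + 1, p => .node
      (if lp p ∈ S ∧ c (lp p) = true then some (buildF S c n (lp p)) else none)
      (if rp p ∈ S ∧ c (rp p) = false then some (buildF S c n (rp p)) else none)

lemma mem_opos_buildF : ∀ (n : ℕ) (p q : Pt), p ∈ S →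
    (q ∈ opos (some (buildF S c n p)) p ↔
      q ∈ S ∧ Desc S c q p ∧ q.1 + q.2 < p.1 + p.2 + n + 1)
  | 0, p, q, hp => by
      rw [buildF, opos_some]
      constructor
      · intro hq
        simp only [opos, Multiset.mem_cons] at hq
        have hq2 : q = p := by
          rcases hq with rfl | hq
          · rfl
          · simp at hq
        subst hq2
        exact ⟨hp, Relation.ReflTransGen.refl, by omega⟩
      · rintro ⟨hqS, hdesc, hlt⟩
        have h1 := hdesc.sum_le
        have hk := hdesc.anc_iterate
        have h2 : q.1 + q.2 - (p.1 + p.2) = 0 := by omega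
        rw [h2] at hk
        simp only [Function.iterate_zero, id_eq] at hk
        subst hk
        exact Multiset.mem_cons_self _ _
  | n + 1, p, q, hp => by
      rw [buildF, opos_some]
      constructor
      · intro hq
        rcases Multiset.mem_cons.1 hq with rfl | hq
        · exact ⟨hp, Relation.ReflTransGen.refl, by omega⟩
        · rcases Multiset.mem_add.1 hq with hq | hq
          · by_cases hl : lp p ∈ S ∧ c (lp p) = true
            · rw [if_pos hl] at hq
              rcases (mem_opos_buildF n (lp p) q hl.1).1 hq with ⟨hqS, hdesc, hlt⟩
              refine ⟨hqS, hdesc.tail ⟨hl.1, Or.inl ⟨hl.2, rfl⟩⟩, ?_⟩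
              simp [lp] at hlt ⊢; omega
            · rw [if_neg hl] at hq
              simp [opos] at hq
          · by_cases hr : rp p ∈ S ∧ c (rp p) = false
            · rw [if_pos hr] at hq
              rcases (mem_opos_buildF n (rp p) q hr.1).1 hq with ⟨hqS, hdesc, hlt⟩
              refine ⟨hqS, hdesc.tail ⟨hr.1, Or.inr ⟨hr.2, rfl⟩⟩, ?_⟩
              simp [rp] at hlt ⊢; omega
            · rw [if_neg hr] at hq
              simp [opos] at hq
      · rintro ⟨hqS, hdesc, hlt⟩
        rcases hdesc.cases_tail with rfl | ⟨m, hqm, hmp⟩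
        · exact Multiset.mem_cons_self _ _
        · refine Multiset.mem_cons_of_mem (Multiset.mem_add.2 ?_)
          rcases hmp.2 with ⟨hc, rfl⟩ | ⟨hc, rfl⟩
          · left
            rw [if_pos ⟨hmp.1, hc⟩]
            refine (mem_opos_buildF n (lp p) q hmp.1).2 ⟨hqS, hqm, ?_⟩
            simp [lp] at hlt ⊢; omega
          · right
            rw [if_pos ⟨hmp.1, hc⟩]
            refine (mem_opos_buildF n (rp p) q hmp.1).2 ⟨hqS, hqm, ?_⟩
            simp [rp] at hlt ⊢; omega

lemma nodup_opos_buildF : ∀ (n : ℕ) (p : Pt), p ∈ S →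
    (opos (some (buildF S c n p)) p).Nodup
  | 0, p, hp => by
      rw [buildF, opos_some]
      simp [opos]
  | n + 1, p, hp => by
      rw [buildF, opos_some]
      rw [Multiset.nodup_cons, Multiset.nodup_add]
      have hmeml : ∀ q ∈ opos (if lp p ∈ S ∧ c (lp p) = true
          then some (buildF S c n (lp p)) else none) (lp p),
          q ∈ S ∧ Desc S c q (lp p) := by
        intro q hq
        split at hq
        · next h =>
            rcases (mem_opos_buildF n (lp p) q h.1).1 hq with ⟨h1, h2, _⟩
            exact ⟨h1, h2⟩
        · simp [opos] at hq
      have hmemr : ∀ q ∈ opos (if rp p ∈ S ∧ c (rp p) = false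
          then some (buildF S c n (rp p)) else none) (rp p),
          q ∈ S ∧ Desc S c q (rp p) := by
        intro q hq
        split at hq
        · next h =>
            rcases (mem_opos_buildF n (rp p) q h.1).1 hq with ⟨h1, h2, _⟩
            exact ⟨h1, h2⟩
        · simp [opos] at hq
      refine ⟨?_, ?_, ?_, ?_⟩
      · intro hmem
        rcases Multiset.mem_add.1 hmem with h | h
        · have := (hmeml p h).2.sum_le; simp [lp] at this
        · have := (hmemr p h).2.sum_le; simp [rp] at this
      · split
        · next h => exact nodup_opos_buildF n (lp p) h.1
        · simp [opos]
      · split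
        · next h => exact nodup_opos_buildF n (rp p) h.1
        · simp [opos]
      · rw [Multiset.disjoint_left]
        intro q hql hqr
        exact desc_lp_rp_disjoint (hmeml q hql).2 (hmemr q hqr).2

lemma mem_olset_buildF : ∀ (n : ℕ) (p q : Pt), p ∈ S →
    (q ∈ olset (some (buildF S c n p)) p ↔
      c q = true ∧ q ∈ opos (some (buildF S c n p)) p ∧ q ≠ p)
  | 0, p, q, hp => by
      rw [buildF, olset, opos_some]
      simp [olset, opos]
  | n + 1, p, q, hp => by
      rw [buildF]
      rw [olset, opos_some]
      constructor
      · intro hq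
        rcases Multiset.mem_add.1 hq with h | h
        · by_cases hl : lp p ∈ S ∧ c (lp p) = true
          · rw [if_pos hl] at h ⊢
            simp only [Option.isSome_some, if_true, Multiset.mem_singleton] at h
            subst h
            refine ⟨hl.2, Multiset.mem_cons_of_mem (Multiset.mem_add.2 (Or.inl
              (root_mem_opos _ _))), ?_⟩
            simp [lp, Prod.ext_iff]
          · rw [if_neg hl] at h
            simp at h
        · rcases Multiset.mem_add.1 h with h | h
          · by_cases hl : lp p ∈ S ∧ c (lp p) = true
            · rw [if_pos hl] at h ⊢
              rcases (mem_olset_buildF n (lp p) q hl.1).1 h with ⟨h1, h2, h3⟩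
              have hd := ((mem_opos_buildF n (lp p) q hl.1).1 h2).2.1.sum_le
              refine ⟨h1, Multiset.mem_cons_of_mem (Multiset.mem_add.2 (Or.inl h2)), ?_⟩
              rintro rfl
              simp [lp] at hd
            · rw [if_neg hl] at h
              simp [olset] at h
          · by_cases hr : rp p ∈ S ∧ c (rp p) = false
            · rw [if_pos hr] at h ⊢
              rcases (mem_olset_buildF n (rp p) q hr.1).1 h with ⟨h1, h2, h3⟩
              have hd := ((mem_opos_buildF n (rp p) q hr.1).1 h2).2.1.sum_le
              refine ⟨h1, Multiset.mem_cons_of_mem (Multiset.mem_add.2 (Or.inr h2)), ?_⟩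
              rintro rfl
              simp [rp] at hd
            · rw [if_neg hr] at h
              simp [olset] at h
      · rintro ⟨hcq, hmem, hne⟩
        rcases Multiset.mem_cons.1 hmem with rfl | hmem
        · exact absurd rfl hne
        · rcases Multiset.mem_add.1 hmem with h | h
          · by_cases hl : lp p ∈ S ∧ c (lp p) = true
            · rw [if_pos hl] at h ⊢
              by_cases hq : q = lp p
              · subst hq
                simp
              · refine Multiset.mem_add.2 (Or.inr (Multiset.mem_add.2 (Or.inl ?_)))
                exact (mem_olset_buildF n (lp p) q hl.1).2 ⟨hcq, h, hq⟩
            · rw [if_neg hl] at h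
              simp [opos] at h
          · by_cases hr : rp p ∈ S ∧ c (rp p) = false
            · rw [if_pos hr] at h ⊢
              by_cases hq : q = rp p
              · subst hq
                rw [hcq] at hr
                exact absurd hr.2 (by simp)
              · refine Multiset.mem_add.2 (Or.inr (Multiset.mem_add.2 (Or.inr ?_)))
                exact (mem_olset_buildF n (rp p) q hr.1).2 ⟨hcq, h, hq⟩
            · rw [if_neg hr] at h
              simp [opos] at h

def Compat (S : Finset Pt) (c : Pt → Bool) : Option BTree → Pt → Prop
  | none, _ => True
  | some (.node l r), p =>
      (l.isSome ↔ (lp p ∈ S ∧ c (lp p) = true)) ∧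
      (r.isSome ↔ (rp p ∈ S ∧ c (rp p) = false)) ∧
      Compat S c l (lp p) ∧ Compat S c r (rp p)

lemma compat_congr {S : Finset Pt} {c c' : Pt → Bool}
    (hcc : ∀ q ∈ S, q ≠ (0, 0) → c q = c' q) :
    ∀ (ot : Option BTree) (p : Pt), Compat S c ot p → Compat S c' ot p
  | none, p, _ => by simp [Compat]
  | some (.node l r), p, h => by
      rw [Compat] at h ⊢
      obtain ⟨h1, h2, h3, h4⟩ := h
      have e1 : (lp p ∈ S ∧ c (lp p) = true) ↔ (lp p ∈ S ∧ c' (lp p) = true) := by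
        constructor
        · rintro ⟨hm, hc⟩
          exact ⟨hm, by rw [← hcc _ hm (by simp [lp, Prod.ext_iff])]; exact hc⟩
        · rintro ⟨hm, hc⟩
          exact ⟨hm, by rw [hcc _ hm (by simp [lp, Prod.ext_iff])]; exact hc⟩
      have e2 : (rp p ∈ S ∧ c (rp p) = false) ↔ (rp p ∈ S ∧ c' (rp p) = false) := by
        constructor
        · rintro ⟨hm, hc⟩
          exact ⟨hm, by rw [← hcc _ hm (by simp [rp, Prod.ext_iff])]; exact hc⟩
        · rintro ⟨hm, hc⟩
          exact ⟨hm, by rw [hcc _ hm (by simp [rp, Prod.ext_iff])]; exact hc⟩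
      exact ⟨h1.trans e1, h2.trans e2, compat_congr hcc l (lp p) h3,
        compat_congr hcc r (rp p) h4⟩
  termination_by ot => osize ot
  decreasing_by all_goals (simp [osize]; try omega)

lemma buildF_eq {S : Finset Pt} {c : Pt → Bool} :
    ∀ (t : BTree) (p : Pt) (n : ℕ), Compat S c (some t) p →
      (∀ q ∈ opos (some t) p, q.1 + q.2 < p.1 + p.2 + n + 1) →
      buildF S c n p = t
  | .node l r, p, n, hcompat, hbound => by
      rw [Compat] at hcompat
      obtain ⟨h1, h2, h3, h4⟩ := hcompat
      cases n with
      | zero =>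
          rw [buildF]
          have hl : l = none := by
            cases l with
            | none => rfl
            | some l' =>
                have := hbound (lp p) (by
                  rw [opos_some]
                  exact Multiset.mem_cons_of_mem (Multiset.mem_add.2
                    (Or.inl (root_mem_opos _ _))))
                exfalso
                simp [lp] at this
          have hr : r = none := by
            cases r with
            | none => rfl
            | some r' =>
                have := hbound (rp p) (by
                  rw [opos_some]
                  exact Multiset.mem_cons_of_mem (Multiset.mem_add.2
                    (Or.inr (root_mem_opos _ _))))
                exfalso
                simp [rp] at this
          rw [hl, hr]
      | succ m =>
          rw [buildF]
          congr 1
          · cases l with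
            | none =>
                rw [if_neg]
                intro hg
                have := h1.2 hg
                simp at this
            | some l' =>
                rw [if_pos (h1.1 (by simp))]
                congr 1
                refine buildF_eq l' (lp p) m h3 ?_
                intro q hq
                have := hbound q (by
                  rw [opos_some]
                  exact Multiset.mem_cons_of_mem (Multiset.mem_add.2 (Or.inl hq)))
                simp [lp] at *
                omega
          · cases r with
            | none =>
                rw [if_neg]
                intro hg
                have := h2.2 hg
                simp at this
            | some r' =>
                rw [if_pos (h2.1 (by simp))]
                congr 1
                refine buildF_eq r' (rp p) m h4 ?_
                intro q hq
                have := hbound q (by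
                  rw [opos_some]
                  exact Multiset.mem_cons_of_mem (Multiset.mem_add.2 (Or.inr hq)))
                simp [rp] at *
                omega
  termination_by t => size t
  decreasing_by all_goals (subst_vars; simp [size, osize]; try omega)

lemma mem_opos_of_overt {ot : Option BTree} {p : Pt} {e : BTree × Pt}
    (he : e ∈ overt ot p) : e.2 ∈ opos ot p := by
  rw [opos_map_overt]
  exact Multiset.mem_map_of_mem _ he

lemma mem_opos_of_olset {ot : Option BTree} {p q : Pt} (h : q ∈ olset ot p) :
    q ∈ opos ot p := by
  rw [opos_split]
  exact Multiset.mem_add.2 (Or.inr (Multiset.mem_add.2 (Or.inl h)))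

lemma mem_opos_of_orset {ot : Option BTree} {p q : Pt} (h : q ∈ orset ot p) :
    q ∈ opos ot p := by
  rw [opos_split]
  exact Multiset.mem_add.2 (Or.inr (Multiset.mem_add.2 (Or.inr h)))

lemma olset_orset_cases {t : BTree} {p q : Pt} (h : q ∈ opos (some t) p) :
    q = p ∨ q ∈ olset (some t) p ∨ q ∈ orset (some t) p := by
  rw [opos_split] at h
  rcases Multiset.mem_add.1 h with h | h
  · left
    simpa using h
  · right
    exact Multiset.mem_add.1 h

lemma olset_orset_disjoint {t : BTree} {p q : Pt}
    (hnd : (opos (some t) p).Nodup)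
    (h1 : q ∈ olset (some t) p) (h2 : q ∈ orset (some t) p) : False := by
  rw [opos_split] at hnd
  rw [Multiset.nodup_add] at hnd
  rcases hnd with ⟨_, hnd2, _⟩
  rw [Multiset.nodup_add] at hnd2
  exact Multiset.disjoint_left.1 hnd2.2.2 h1 h2

lemma compat_of_tree {t0 : BTree} (hnd : (opos (some t0) (0, 0)).Nodup) :
    ∀ (ot : Option BTree) (p : Pt),
      (∀ e ∈ overt ot p, e ∈ overt (some t0) (0, 0)) →
      Compat ((opos (some t0) (0, 0)).toFinset)
        (fun q => decide (q ∈ olset (some t0) (0, 0))) ot p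
  | none, p, _ => by simp [Compat]
  | some (.node l r), p, hsub => by
      have hmapnd : ((overt (some t0) (0, 0)).map Prod.snd).Nodup := by
        rw [← opos_map_overt]
        exact hnd
      have hhead : (BTree.node l r, p) ∈ overt (some t0) (0, 0) :=
        hsub _ (by rw [overt]; exact Multiset.mem_cons_self _ _)
      rw [Compat]
      refine ⟨?_, ?_, ?_, ?_⟩
      · constructor
        · intro hl
          rcases Option.isSome_iff_exists.1 hl with ⟨a, ha⟩
          subst ha
          have holm : lp p ∈ olset (some t0) (0, 0) :=
            (mem_olset_iff _ _ _).2 ⟨a, r, p, hhead, rfl⟩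
          exact ⟨Multiset.mem_toFinset.2 (mem_opos_of_olset holm), by simpa using holm⟩
        · rintro ⟨hmem, hc⟩
          have hc' : lp p ∈ olset (some t0) (0, 0) := by simpa using hc
          rcases (mem_olset_iff _ _ _).1 hc' with ⟨a, b, x, hx, hlpx⟩
          have hxp : p = x := lp_inj hlpx
          subst hxp
          have heq := Multiset.inj_on_of_nodup_map hmapnd _ hhead _ hx rfl
          injection heq with heq1 _
          injection heq1 with hl _
          rw [hl]
          simp
      · constructor
        · intro hr
          rcases Option.isSome_iff_exists.1 hr with ⟨b, hb⟩
          subst hb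
          have horm : rp p ∈ orset (some t0) (0, 0) :=
            (mem_orset_iff _ _ _).2 ⟨l, b, p, hhead, rfl⟩
          refine ⟨Multiset.mem_toFinset.2 (mem_opos_of_orset horm), ?_⟩
          simp only [decide_eq_false_iff_not]
          intro hol
          exact olset_orset_disjoint hnd hol horm
        · rintro ⟨hmem, hc⟩
          have hmem' : rp p ∈ opos (some t0) (0, 0) := Multiset.mem_toFinset.1 hmem
          have hnol : rp p ∉ olset (some t0) (0, 0) := by simpa using hc
          rcases olset_orset_cases hmem' with h0 | h | h
          · exact absurd h0 (by simp [rp, Prod.ext_iff])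
          · exact absurd h hnol
          · rcases (mem_orset_iff _ _ _).1 h with ⟨a, b, x, hx, hrpx⟩
            have hxp : p = x := rp_inj hrpx
            subst hxp
            have heq := Multiset.inj_on_of_nodup_map hmapnd _ hhead _ hx rfl
            injection heq with heq1 _
            injection heq1 with _ hr
            rw [hr]
            simp
      · refine compat_of_tree hnd l (lp p) ?_
        intro e he
        exact hsub e (by
          rw [overt]
          exact Multiset.mem_cons_of_mem (Multiset.mem_add.2 (Or.inl he)))
      · refine compat_of_tree hnd r (rp p) ?_
        intro e he
        exact hsub e (by
          rw [overt]
          exact Multiset.mem_cons_of_mem (Multiset.mem_add.2 (Or.inr he)))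
  termination_by ot => osize ot
  decreasing_by all_goals (simp [osize]; try omega)

def Ok (S : Finset Pt) (q : Pt) (b : Bool) : Prop :=
  if b then 1 ≤ q.1 ∧ (q.1 - 1, q.2) ∈ S else 1 ≤ q.2 ∧ (q.1, q.2 - 1) ∈ S

lemma ok_of_tree {t0 : BTree} {q : Pt} (hq : q ∈ opos (some t0) (0, 0))
    (hne : q ≠ (0, 0)) :
    Ok ((opos (some t0) (0, 0)).toFinset) q (decide (q ∈ olset (some t0) (0, 0))) := by
  by_cases hol : q ∈ olset (some t0) (0, 0)
  · rw [Ok, decide_eq_true hol, if_pos rfl]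
    rcases (mem_olset_iff _ _ _).1 hol with ⟨a, b, x, hx, rfl⟩
    have hxm : x ∈ opos (some t0) (0, 0) := mem_opos_of_overt hx
    constructor
    · simp [lp]
    · have : (lp x).1 - 1 = x.1 ∧ (lp x).2 = x.2 := by simp [lp]
      rw [show ((lp x).1 - 1, (lp x).2) = x from Prod.ext this.1 this.2]
      exact Multiset.mem_toFinset.2 hxm
  · rw [Ok, decide_eq_false hol, if_neg (by simp)]
    rcases olset_orset_cases hq with h0 | h | h
    · exact absurd h0 hne
    · exact absurd h hol
    · rcases (mem_orset_iff _ _ _).1 h with ⟨a, b, x, hx, rfl⟩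
      have hxm : x ∈ opos (some t0) (0, 0) := mem_opos_of_overt hx
      constructor
      · simp [rp]
      · have : (rp x).1 = x.1 ∧ (rp x).2 - 1 = x.2 := by simp [rp]
        rw [show ((rp x).1, (rp x).2 - 1) = x from Prod.ext this.1 this.2]
        exact Multiset.mem_toFinset.2 hxm

lemma desc_root {S : Finset Pt} {c : Pt → Bool}
    (hok : ∀ q ∈ S, q ≠ (0, 0) → Ok S q (c q)) :
    ∀ (q : Pt), q ∈ S → Desc S c q (0, 0)
  | q, hq => by
      by_cases h0 : q = (0, 0)
      · subst h0
        exact Relation.ReflTransGen.refl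
      · have hOk := hok q hq h0
        rw [Ok] at hOk
        cases hcq : c q with
        | true =>
            rw [hcq, if_pos rfl] at hOk
            have hm : (q.1 - 1, q.2) ∈ S := hOk.2
            have : (q.1 - 1) + q.2 < q.1 + q.2 := by
              rcases hOk with ⟨h1, _⟩
              omega
            have hd := desc_root hok (q.1 - 1, q.2) hm
            exact Relation.ReflTransGen.head
              ⟨hq, Or.inl ⟨hcq, by simp [lp, Prod.ext_iff]; omega⟩⟩ hd
        | false =>
            rw [hcq] at hOk
            simp only [Bool.false_eq_true, if_false] at hOk
            have hm : (q.1, q.2 - 1) ∈ S := hOk.2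
            have hlt : q.1 + (q.2 - 1) < q.1 + q.2 := by
              rcases hOk with ⟨h1, _⟩
              omega
            have hd := desc_root hok (q.1, q.2 - 1) hm
            exact Relation.ReflTransGen.head
              ⟨hq, Or.inr ⟨hcq, by simp [rp, Prod.ext_iff]; omega⟩⟩ hd
  termination_by q => q.1 + q.2

end

lemma card_bool_subtype (P Q : Prop) [Decidable P] [Decidable Q] (h : P ∨ Q) :
    Nat.card {b : Bool // if b then P else Q} = if P ∧ Q then 2 else 1 := by
  by_cases hP : P <;> by_cases hQ : Q
  · rw [if_pos ⟨hP, hQ⟩]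
    have hall : ∀ b : Bool, if b then P else Q := by
      intro b
      cases b
      · simpa using hQ
      · simpa using hP
    rw [Nat.card_congr (Equiv.subtypeUnivEquiv hall)]
    simp [Nat.card_eq_fintype_card]
  · rw [if_neg (by tauto)]
    haveI : Unique {b : Bool // if b then P else Q} := by
      refine ⟨⟨⟨true, by simpa using hP⟩⟩, ?_⟩
      rintro ⟨b, hb⟩
      cases b
      · exact absurd (by simpa using hb) hQ
      · rfl
    exact Nat.card_unique
  · rw [if_neg (by tauto)]
    haveI : Unique {b : Bool // if b then P else Q} := by
      refine ⟨⟨⟨false, by simpa using hQ⟩⟩, ?_⟩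
      rintro ⟨b, hb⟩
      cases b
      · rfl
      · exact absurd (by simpa using hb) hP
    exact Nat.card_unique
  · tauto

end BTreeAux

section MainProof
open BTree BTreeAux

/-- for a finite set `S ⊆ ℕ×ℕ` containing `(0,0)`, the number of rooted
binary trees whose position map is injective with image exactly `S` is either `0` or
`2^k`, where `k` is the number of `(a,b) ∈ S` with `a, b ≥ 1`, `(a−1,b) ∈ S` and
`(a,b−1) ∈ S`. -/
theorem number_of_trees_on_support (S : Finset (ℕ × ℕ)) (hS : (0, 0) ∈ S) :
    Set.ncard {t : BTree | t.PosInjective ∧ t.positions.toFinset = S} = 0 ∨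
    Set.ncard {t : BTree | t.PosInjective ∧ t.positions.toFinset = S} =
      2 ^ (S.filter fun p =>
        1 ≤ p.1 ∧ 1 ≤ p.2 ∧ (p.1 - 1, p.2) ∈ S ∧ (p.1, p.2 - 1) ∈ S).card := by
  classical
  by_cases hex : ∀ q ∈ S, q ≠ (0, 0) →
      (1 ≤ q.1 ∧ (q.1 - 1, q.2) ∈ S) ∨ (1 ≤ q.2 ∧ (q.1, q.2 - 1) ∈ S)
  · right
    set D : Finset (ℕ × ℕ) := S.erase (0, 0) with hD
    set N : ℕ := S.sup (fun q => q.1 + q.2) with hN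
    let cext : ({x // x ∈ D} → Bool) → (ℕ × ℕ) → Bool :=
      fun c q => if h : q ∈ D then c ⟨q, h⟩ else true
    have hmemD : ∀ q : ℕ × ℕ, q ∈ S → q ≠ (0, 0) → q ∈ D := by
      intro q hq h0
      exact Finset.mem_erase.2 ⟨h0, hq⟩
    have hvalid : ∀ (c : {c : {x // x ∈ D} → Bool // ∀ q, Ok S q.1 (c q)}),
        ∀ q ∈ S, q ≠ (0, 0) → Ok S q (cext c.1 q) := by
      rintro ⟨c, hc⟩ q hq h0
      have hqD : q ∈ D := hmemD q hq h0
      show Ok S q (if h : q ∈ D then c ⟨q, h⟩ else true)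
      rw [dif_pos hqD]
      exact hc ⟨q, hqD⟩
    have hbuild_mem : ∀ (c : {c : {x // x ∈ D} → Bool // ∀ q, Ok S q.1 (c q)}) (q : ℕ × ℕ),
        q ∈ opos (some (buildF S (cext c.1) N (0, 0))) (0, 0) ↔ q ∈ S := by
      intro c q
      rw [mem_opos_buildF N (0, 0) q hS]
      constructor
      · exact fun h => h.1
      · intro hq
        refine ⟨hq, desc_root (hvalid c) q hq, ?_⟩
        have : q.1 + q.2 ≤ N := Finset.le_sup (f := fun q => q.1 + q.2) hq
        omega
    let f : {c : {x // x ∈ D} → Bool // ∀ q, Ok S q.1 (c q)} →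
        {t : BTree // t.PosInjective ∧ t.positions.toFinset = S} := fun c =>
      ⟨buildF S (cext c.1) N (0, 0), nodup_opos_buildF N (0, 0) hS, by
        ext q
        rw [Multiset.mem_toFinset]
        exact hbuild_mem c q⟩
    let g : {t : BTree // t.PosInjective ∧ t.positions.toFinset = S} →
        {c : {x // x ∈ D} → Bool // ∀ q, Ok S q.1 (c q)} := fun t =>
      ⟨fun q => decide (q.1 ∈ olset (some t.1) (0, 0)), by
        rintro ⟨q, hq⟩
        obtain ⟨t, hnd, htf⟩ := t
        have hq0 : q ≠ (0, 0) := (Finset.mem_erase.1 hq).1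
        have hqS : q ∈ S := (Finset.mem_erase.1 hq).2
        have hqpos : q ∈ opos (some t) (0, 0) := by
          rw [← Multiset.mem_toFinset]
          exact htf ▸ hqS
        have := ok_of_tree hqpos hq0
        rwa [show (opos (some t) (0, 0)).toFinset = S from htf] at this⟩
    have hgf : ∀ c, g (f c) = c := by
      rintro ⟨c, hc⟩
      apply Subtype.ext
      funext q
      obtain ⟨q, hq⟩ := q
      have hq0 : q ≠ (0, 0) := (Finset.mem_erase.1 hq).1
      have hqS : q ∈ S := (Finset.mem_erase.1 hq).2
      show decide (q ∈ olset (some (buildF S (cext c) N (0, 0))) (0, 0)) = c ⟨q, hq⟩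
      have hcx : cext c q = c ⟨q, hq⟩ := dif_pos hq
      have hchar := mem_olset_buildF (c := cext c) N (0, 0) q hS
      have hqpos : q ∈ opos (some (buildF S (cext c) N (0, 0))) (0, 0) :=
        (hbuild_mem ⟨c, hc⟩ q).2 hqS
      cases hb : c ⟨q, hq⟩ with
      | true =>
          apply decide_eq_true
          exact hchar.2 ⟨by rw [hcx, hb], hqpos, hq0⟩
      | false =>
          apply decide_eq_false
          intro hmem
          have := (hchar.1 hmem).1
          rw [hcx, hb] at this
          simp at this
    have hfg : ∀ t, f (g t) = t := by
      rintro ⟨t, hnd, htf⟩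
      apply Subtype.ext
      show buildF S (cext (g ⟨t, hnd, htf⟩).1) N (0, 0) = t
      have htf' : (opos (some t) (0, 0)).toFinset = S := htf
      refine buildF_eq t (0, 0) N ?_ ?_
      · have hbase := compat_of_tree hnd (some t) (0, 0) (fun e he => he)
        rw [htf'] at hbase
        refine compat_congr ?_ (some t) (0, 0) hbase
        intro q hq h0
        have hqD : q ∈ D := hmemD q hq h0
        show decide (q ∈ olset (some t) (0, 0)) =
          (if h : q ∈ D then decide (q ∈ olset (some t) (0, 0)) else true)
        rw [dif_pos hqD]
      · intro q hq
        have hqS : q ∈ S := by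
          rw [← htf']
          exact Multiset.mem_toFinset.2 hq
        have : q.1 + q.2 ≤ N := Finset.le_sup (f := fun q => q.1 + q.2) hqS
        omega
    have hequiv : {t : BTree // t.PosInjective ∧ t.positions.toFinset = S} ≃
        {c : {x // x ∈ D} → Bool // ∀ q, Ok S q.1 (c q)} :=
      ⟨g, f, hfg, hgf⟩
    have hcard : Set.ncard {t : BTree | t.PosInjective ∧ t.positions.toFinset = S} =
        Nat.card {c : {x // x ∈ D} → Bool // ∀ q, Ok S q.1 (c q)} := by
      rw [← Nat.card_coe_set_eq]
      exact Nat.card_congr hequiv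
    rw [hcard]
    rw [Nat.card_congr (Equiv.subtypePiEquivPi (p := fun (q : {x // x ∈ D}) b => Ok S q.1 b))]
    rw [Nat.card_pi]
    have hpt : ∀ q : {x // x ∈ D}, Nat.card {b : Bool // Ok S q.1 b} =
        if (1 ≤ q.1.1 ∧ (q.1.1 - 1, q.1.2) ∈ S) ∧ (1 ≤ q.1.2 ∧ (q.1.1, q.1.2 - 1) ∈ S)
        then 2 else 1 := by
      rintro ⟨q, hq⟩
      exact card_bool_subtype _ _ (hex q (Finset.mem_erase.1 hq).2 (Finset.mem_erase.1 hq).1)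
    rw [Finset.prod_congr rfl (fun q _ => hpt q)]
    rw [Finset.prod_coe_sort D (fun q =>
      if (1 ≤ q.1 ∧ (q.1 - 1, q.2) ∈ S) ∧ (1 ≤ q.2 ∧ (q.1, q.2 - 1) ∈ S) then 2 else 1)]
    rw [Finset.prod_ite, Finset.prod_const, Finset.prod_const_one, mul_one]
    congr 1
    have : D.filter (fun q => (1 ≤ q.1 ∧ (q.1 - 1, q.2) ∈ S) ∧ (1 ≤ q.2 ∧ (q.1, q.2 - 1) ∈ S))
        = S.filter (fun p => 1 ≤ p.1 ∧ 1 ≤ p.2 ∧ (p.1 - 1, p.2) ∈ S ∧ (p.1, p.2 - 1) ∈ S) := by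
      ext p
      simp only [Finset.mem_filter, Finset.mem_erase, hD]
      constructor
      · rintro ⟨⟨_, hpS⟩, ⟨h1, h2⟩, h3, h4⟩
        exact ⟨hpS, h1, h3, h2, h4⟩
      · rintro ⟨hpS, h1, h3, h2, h4⟩
        refine ⟨⟨?_, hpS⟩, ⟨h1, h2⟩, h3, h4⟩
        intro h0
        rw [h0] at h1
        simp at h1
    rw [this]
  · left
    have hempty : {t : BTree | t.PosInjective ∧ t.positions.toFinset = S} = ∅ := by
      ext t
      simp only [Set.mem_empty_iff_false, iff_false, Set.mem_setOf_eq]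
      rintro ⟨hnd, htf⟩
      push_neg at hex
      obtain ⟨q, hqS, hq0, hno⟩ := hex
      have htf' : (opos (some t) (0, 0)).toFinset = S := htf
      have hqpos : q ∈ opos (some t) (0, 0) := by
        rw [← Multiset.mem_toFinset, htf']
        exact hqS
      have hok := ok_of_tree hqpos hq0
      rw [htf'] at hok
      rw [Ok] at hok
      rcases hno with ⟨hn1, hn2⟩
      by_cases hd : decide (q ∈ olset (some t) (0, 0)) = true
      · rw [hd, if_pos rfl] at hok
        exact hn1 hok.1 hok.2
      · rw [Bool.not_eq_true] at hd
        rw [hd, if_neg (by simp)] at hok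
        exact hn2 hok.1 hok.2
    rw [hempty]
    exact Set.ncard_empty _

end MainProof
end
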